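/- Let G be a group, H ≤ G a subgroup, x, g ∈ G, and B a finite subset of G containing 1, with N = |B|. Suppose that for every positive integer m with x⁻¹·gᵐ ∈ H there exist elements y₀, y₁, …, y_m ∈ B with y_m = 1 and x⁻¹·gⁱ·yᵢ ∈ H for all 0 ≤ i ≤ m. Then if there exists some positive integer m with x⁻¹·gᵐ ∈ H, there exists a positive integer n with n ≤ N and x⁻¹·gⁿ ∈ H. -/

import Mathlib

/-!
Take the least positive `m` with `x⁻¹gᵐ ∈ H` and suppose `m > |B|`. By pigeonhole two indices
`1 ≤ i < j ≤ m` carry the same `y = yᵢ = yⱼ`; then `(x⁻¹gⁱy)(x⁻¹gʲy)⁻¹ = x⁻¹gⁱ⁻ʲx` lies in `H`,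
and multiplying by `x⁻¹gᵐ` puts `x⁻¹gᵐ⁻⁽ʲ⁻ⁱ⁾` in `H` with `0 < m - (j - i) < m`, contradicting minimality.
-/

namespace Subgroup

variable {G : Type*} [Group G] (H : Subgroup G) {x g y : G}

theorem inv_mul_zpow_sub_mem {i j m : ℤ} (hi : x⁻¹ * g ^ i * y ∈ H)
    (hj : x⁻¹ * g ^ j * y ∈ H) (hm : x⁻¹ * g ^ m ∈ H) : x⁻¹ * g ^ (m + i - j) ∈ H := by
  have hprod : x⁻¹ * g ^ i * y * (x⁻¹ * g ^ j * y)⁻¹ * (x⁻¹ * g ^ m)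
      = x⁻¹ * g ^ (m + i - j) := by
    rw [sub_eq_add_neg, zpow_add, zpow_add, zpow_neg]
    group
  rw [← hprod]
  exact H.mul_mem (H.mul_mem hi (H.inv_mem hj)) hm

theorem inv_mul_pow_sub_mem {i j m : ℕ} (hji : j ≤ m + i) (hi : x⁻¹ * g ^ i * y ∈ H)
    (hj : x⁻¹ * g ^ j * y ∈ H) (hm : x⁻¹ * g ^ m ∈ H) : x⁻¹ * g ^ (m + i - j) ∈ H := by
  have := H.inv_mul_zpow_sub_mem (i := i) (j := j) (m := m)
    (by simpa only [zpow_natCast]) (by simpa only [zpow_natCast]) (by simpa only [zpow_natCast])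
  rwa [← Nat.cast_add, ← Nat.cast_sub hji, zpow_natCast] at this

theorem exists_pos_lt_inv_mul_pow_mem_of_card_lt {B : Finset G} {m : ℕ} {y : ℕ → G}
    (hyB : ∀ i ≤ m, y i ∈ B) (hyH : ∀ i ≤ m, x⁻¹ * g ^ i * y i ∈ H) (hm : x⁻¹ * g ^ m ∈ H)
    (hcard : B.card < m) : ∃ n, 0 < n ∧ n < m ∧ x⁻¹ * g ^ n ∈ H := by
  have hmaps : ∀ i ∈ Finset.Icc 1 m, y i ∈ B := fun i hi => hyB i (Finset.mem_Icc.mp hi).2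
  have hlt : B.card < (Finset.Icc 1 m).card := by rwa [Nat.card_Icc, Nat.add_sub_cancel]
  obtain ⟨i, hi, j, hj, hij, hyij⟩ := Finset.exists_ne_map_eq_of_card_lt_of_maps_to hlt hmaps
  rw [Finset.mem_Icc] at hi hj
  wlog hlt' : i < j generalizing i j
  · exact this j hj i hi hij.symm hyij.symm (by omega)
  refine ⟨m + i - j, by omega, by omega, H.inv_mul_pow_sub_mem (by omega) (hyH i hi.2) ?_ hm⟩
  exact hyij ▸ hyH j hj.2

end Subgroup

theorem power_coset_pigeonhole_general (G : Type*) [Group G] (H : Subgroup G)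
    (x g : G) (B : Finset G)
    (hyp : ∀ m : ℕ, 0 < m → x⁻¹ * g ^ m ∈ H →
      ∃ y : ℕ → G, (∀ i ≤ m, y i ∈ B) ∧ y m = 1 ∧ ∀ i ≤ m, x⁻¹ * g ^ i * y i ∈ H)
    (hex : ∃ m : ℕ, 0 < m ∧ x⁻¹ * g ^ m ∈ H) :
    ∃ n : ℕ, 0 < n ∧ n ≤ B.card ∧ x⁻¹ * g ^ n ∈ H := by
  classical
  obtain ⟨hmpos, hmH⟩ := Nat.find_spec hex
  refine ⟨Nat.find hex, hmpos, ?_, hmH⟩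
  by_contra! hcard
  obtain ⟨y, hyB, -, hyH⟩ := hyp _ hmpos hmH
  obtain ⟨n, hnpos, hnlt, hnH⟩ :=
    H.exists_pos_lt_inv_mul_pow_mem_of_card_lt hyB hyH hmH hcard
  exact Nat.find_min hex hnlt ⟨hnpos, hnH⟩

/-- Pigeonhole bound for power coset membership: if every witness `x⁻¹gᵐ ∈ H` is
accompanied by elements `yᵢ` of a fixed finite set `B` (with `y_m = 1`) such that
`x⁻¹gⁱyᵢ ∈ H` for all `i ≤ m`, then some positive power `n ≤ |B|` already satisfies
`x⁻¹gⁿ ∈ H`. -/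
theorem power_coset_pigeonhole (G : Type*) [Group G] (H : Subgroup G)
    (x g : G) (B : Finset G) (hB1 : (1 : G) ∈ B)
    (hyp : ∀ m : ℕ, 0 < m → x⁻¹ * g ^ m ∈ H →
      ∃ y : ℕ → G, (∀ i ≤ m, y i ∈ B) ∧ y m = 1 ∧ ∀ i ≤ m, x⁻¹ * g ^ i * y i ∈ H)
    (hex : ∃ m : ℕ, 0 < m ∧ x⁻¹ * g ^ m ∈ H) :
    ∃ n : ℕ, 0 < n ∧ n ≤ B.card ∧ x⁻¹ * g ^ n ∈ H :=
  power_coset_pigeonhole_general G H x g B hyp hex
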